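/- Let A, B, B', C ∈ ℂ^{r×r} with C + nI invertible for all integers n ≥ 0, AB = BA, B'C = CB', and |x| < 1, |y| < 1. (i) If A + kI is invertible for all integers k ≥ 0, then for every non-negative integer s: F₁(A+sI, B, B'; C; x, y) = F₁(A, B, B'; C; x, y) + x·B·[∑_{k=1}^{s} F₁(A+kI, B+I, B'; C+I; x, y)]·C⁻¹ + y·[∑_{k=1}^{s} F₁(A+kI, B, B'+I; C+I; x, y)]·B'·C⁻¹. (ii) If moreover A − kI is invertible for all integers 1 ≤ k ≤ s, then F₁(A−sI, B, B'; C; x, y) = F₁(A, B, B'; C; x, y) − x·B·[∑_{k=0}^{s−1} F₁(A−kI, B+I, B'; C+I; x, y)]·C⁻¹ − y·[∑_{k=0}^{s−1} F₁(A−kI, B, B'+I; C+I; x, y)]·B'·C⁻¹. -/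

import Mathlib

/-- The shifted factorial (Pochhammer) matrix: `(A)_0 = I`, `(A)_{n+1} = (A)_n (A + nI)`. -/
noncomputable def mPoch {r : ℕ} (A : Matrix (Fin r) (Fin r) ℂ) : ℕ → Matrix (Fin r) (Fin r) ℂ
  | 0 => 1
  | n + 1 => mPoch A n * (A + (n : ℂ) • 1)

/-- The first Appell matrix function `F₁(A, B, B'; C; x, y)`. -/
noncomputable def appellF1 {r : ℕ} (A B B' C : Matrix (Fin r) (Fin r) ℂ) (x y : ℂ) :
    Matrix (Fin r) (Fin r) ℂ :=
  ∑' p : ℕ × ℕ,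
    (((p.1.factorial : ℂ) * (p.2.factorial : ℂ))⁻¹ * x ^ p.1 * y ^ p.2) •
      (mPoch A (p.1 + p.2) * mPoch B p.1 * mPoch B' p.2 * (mPoch C (p.1 + p.2))⁻¹)

/-!
The identity for `A - sI` is the one for a single step read backwards, and the one for `A + sI` is
that step iterated:
`F₁(A + I) = F₁(A) + x B F₁(A + I, B + I, B'; C + I) C⁻¹ + y F₁(A + I, B, B' + I; C + I) B' C⁻¹`.
The step holds term by term: `(A + I)_k - (A)_k = k (A + I)_{k-1}`, and splitting `k = m + n` gives
the two corrections after shifting `m` (resp. `n`) by one, using `(B)_{m+1} = B (B + I)_m`,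
`(B')_{n+1} = (B' + I)_n B'`, `(C)_{k+1}⁻¹ = (C + I)_k⁻¹ C⁻¹` and the commutation hypotheses.
Summing term by term is justified by absolute convergence for `|x|, |y| < 1`: in the `ℓ∞` operator
norm `‖(C + jI)⁻¹‖ ≤ 1 / (j - ‖C‖)` for large `j`, so the `(m, n)`-th term is `|x|ᵐ |y|ⁿ` times
factors of subexponential growth.
-/

open Filter Finset Topology

theorem Commute.nonsing_inv_right {n α : Type*} [Fintype n] [DecidableEq n] [CommRing α]
    {X N : Matrix n n α} (h : Commute X N) : Commute X N⁻¹ := by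
  by_cases hN : IsUnit N.det
  · let := N.invertibleOfIsUnitDet hN
    rw [← Matrix.invOf_eq_nonsing_inv]
    exact h.invOf_right
  · rw [Matrix.nonsing_inv_apply_not_isUnit N hN]
    exact Commute.zero_right X

section Pochhammer

variable {r : ℕ}

local notation "𝕄" => Matrix (Fin r) (Fin r) ℂ

theorem Commute.mPoch_right {X A : 𝕄} (h : Commute X A) (n : ℕ) : Commute X (mPoch A n) := by
  induction n with
  | zero => exact Commute.one_right X
  | succ n ih => exact ih.mul_right (h.add_right ((Commute.one_right X).smul_right _))

theorem mPoch_succ_eq_mul_mPoch_add_one (A : 𝕄) (n : ℕ) :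
    mPoch A (n + 1) = A * mPoch (A + 1) n := by
  induction n with
  | zero => simp [mPoch]
  | succ n ih =>
    rw [mPoch, ih, mPoch, mul_assoc]
    congr 2
    push_cast
    module

theorem mPoch_succ_eq_mPoch_add_one_mul (A : 𝕄) (n : ℕ) :
    mPoch A (n + 1) = mPoch (A + 1) n * A := by
  rw [mPoch_succ_eq_mul_mPoch_add_one,
    (((Commute.refl A).add_right (Commute.one_right A)).mPoch_right n).eq]

theorem mPoch_add_one (A : 𝕄) (n : ℕ) :
    mPoch (A + 1) n = mPoch A n + (n : ℂ) • mPoch (A + 1) (n - 1) := by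
  cases n with
  | zero => simp [mPoch]
  | succ n =>
    rw [mPoch_succ_eq_mPoch_add_one_mul A n, mPoch, Nat.add_sub_cancel]
    push_cast
    simp only [mul_add, mul_smul_comm, mul_one]
    module

theorem inv_mPoch_succ (C : 𝕄) (n : ℕ) :
    (mPoch C (n + 1))⁻¹ = (mPoch (C + 1) n)⁻¹ * C⁻¹ := by
  rw [mPoch_succ_eq_mul_mPoch_add_one, Matrix.mul_inv_rev]

end Pochhammer

theorem hasSum_comp_succ_fst_iff {α : Type*} [AddCommMonoid α] [TopologicalSpace α]
    {f : ℕ × ℕ → α} (hf : ∀ n, f (0, n) = 0) {a : α} :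
    HasSum (fun p : ℕ × ℕ => f (p.1 + 1, p.2)) a ↔ HasSum f a := by
  refine Function.Injective.hasSum_iff (g := fun p : ℕ × ℕ => (p.1 + 1, p.2)) ?_ ?_
  · rintro ⟨_, _⟩ ⟨_, _⟩ h
    simpa using h
  · rintro ⟨_ | m, n⟩ h
    · exact hf n
    · exact absurd ⟨(m, n), rfl⟩ h

theorem hasSum_comp_succ_snd_iff {α : Type*} [AddCommMonoid α] [TopologicalSpace α]
    {f : ℕ × ℕ → α} (hf : ∀ m, f (m, 0) = 0) {a : α} :
    HasSum (fun p : ℕ × ℕ => f (p.1, p.2 + 1)) a ↔ HasSum f a := by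
  refine Function.Injective.hasSum_iff (g := fun p : ℕ × ℕ => (p.1, p.2 + 1)) ?_ ?_
  · rintro ⟨_, _⟩ ⟨_, _⟩ h
    simpa using h
  · rintro ⟨m, _ | n⟩ h
    · exact hf m
    · exact absurd ⟨(m, n), rfl⟩ h

section Terms

variable {r : ℕ}

local notation "𝕄" => Matrix (Fin r) (Fin r) ℂ

noncomputable def appellF1Coeff (x y : ℂ) (p : ℕ × ℕ) : ℂ :=
  ((p.1.factorial : ℂ) * p.2.factorial)⁻¹ * x ^ p.1 * y ^ p.2

noncomputable def appellF1Term (A B B' C : 𝕄) (x y : ℂ) (p : ℕ × ℕ) : 𝕄 :=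
  appellF1Coeff x y p • (mPoch A (p.1 + p.2) * mPoch B p.1 * mPoch B' p.2 * (mPoch C (p.1 + p.2))⁻¹)

/-- `(m! n!)⁻¹ xᵐ yⁿ (A + 1)_{m+n-1} (B)_m (B')_n (C)_{m+n}⁻¹`. It only enters multiplied by `m`
or `n`, so the truncated subtraction at `m + n = 0` is harmless. -/
noncomputable def appellF1ShiftTerm (A B B' C : 𝕄) (x y : ℂ) (p : ℕ × ℕ) : 𝕄 :=
  appellF1Coeff x y p •
    (mPoch (A + 1) (p.1 + p.2 - 1) * mPoch B p.1 * mPoch B' p.2 * (mPoch C (p.1 + p.2))⁻¹)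

theorem appellF1_eq_tsum (A B B' C : 𝕄) (x y : ℂ) :
    appellF1 A B B' C x y = ∑' p, appellF1Term A B B' C x y p :=
  rfl

theorem natCast_succ_mul_appellF1Coeff_succ_fst (x y : ℂ) (m n : ℕ) :
    ((m + 1 : ℕ) : ℂ) * appellF1Coeff x y (m + 1, n) = x * appellF1Coeff x y (m, n) := by
  simp only [appellF1Coeff, Nat.factorial_succ]
  push_cast
  field_simp
  ring

theorem natCast_succ_mul_appellF1Coeff_succ_snd (x y : ℂ) (m n : ℕ) :
    ((n + 1 : ℕ) : ℂ) * appellF1Coeff x y (m, n + 1) = y * appellF1Coeff x y (m, n) := by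
  simp only [appellF1Coeff, Nat.factorial_succ]
  push_cast
  field_simp
  ring

theorem appellF1Term_add_one (A B B' C : 𝕄) (x y : ℂ) (p : ℕ × ℕ) :
    appellF1Term (A + 1) B B' C x y p =
      appellF1Term A B B' C x y p + (p.1 : ℂ) • appellF1ShiftTerm A B B' C x y p +
        (p.2 : ℂ) • appellF1ShiftTerm A B B' C x y p := by
  simp only [appellF1Term, appellF1ShiftTerm]
  rw [mPoch_add_one A]
  push_cast
  simp only [add_mul, smul_mul_assoc]
  module

theorem natCast_succ_smul_appellF1ShiftTerm_succ_fst {A B : 𝕄} (hAB : Commute A B) (B' C : 𝕄)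
    (x y : ℂ) (m n : ℕ) :
    ((m + 1 : ℕ) : ℂ) • appellF1ShiftTerm A B B' C x y (m + 1, n) =
      x • (B * appellF1Term (A + 1) (B + 1) B' (C + 1) x y (m, n) * C⁻¹) := by
  have hB : Commute B (mPoch (A + 1) (m + n)) :=
    (hAB.symm.add_right (Commute.one_right B)).mPoch_right _
  simp only [appellF1ShiftTerm, appellF1Term, smul_smul, mul_smul_comm, smul_mul_assoc,
    natCast_succ_mul_appellF1Coeff_succ_fst]
  rw [show m + 1 + n - 1 = m + n by omega, show m + 1 + n = m + n + 1 by omega,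
    mPoch_succ_eq_mul_mPoch_add_one B, inv_mPoch_succ]
  simp only [← mul_assoc, hB.eq]

theorem natCast_succ_smul_appellF1ShiftTerm_succ_snd (A B : 𝕄) {B' C : 𝕄} (hB'C : Commute B' C)
    (x y : ℂ) (m n : ℕ) :
    ((n + 1 : ℕ) : ℂ) • appellF1ShiftTerm A B B' C x y (m, n + 1) =
      y • (appellF1Term (A + 1) B (B' + 1) (C + 1) x y (m, n) * B' * C⁻¹) := by
  have hB' : Commute B' (mPoch (C + 1) (m + n))⁻¹ :=
    ((hB'C.add_right (Commute.one_right B')).mPoch_right _).nonsing_inv_right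
  simp only [appellF1ShiftTerm, appellF1Term, smul_smul, smul_mul_assoc,
    natCast_succ_mul_appellF1Coeff_succ_snd]
  rw [show m + (n + 1) - 1 = m + n by omega, show m + (n + 1) = m + n + 1 by omega,
    mPoch_succ_eq_mPoch_add_one_mul B', inv_mPoch_succ]
  simp only [← mul_assoc]
  rw [mul_assoc _ B', hB'.eq, ← mul_assoc]

end Terms

theorem exists_prod_range_le_mul_pow {f : ℕ → ℝ} {ρ : ℝ} (hρ : 0 < ρ) (hf0 : ∀ j, 0 ≤ f j)
    (hf : ∀ᶠ j in atTop, f j ≤ ρ) : ∃ K, ∀ k, ∏ j ∈ range k, f j ≤ K * ρ ^ k := by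
  obtain ⟨N, hN⟩ := eventually_atTop.1 hf
  have hprod0 (k : ℕ) : 0 ≤ ∏ j ∈ range k, f j := prod_nonneg fun j _ => hf0 j
  have tail (i : ℕ) : ∏ j ∈ range (N + i), f j ≤ ρ ^ i * ∏ j ∈ range N, f j :=
    le_geom (u := fun i => ∏ j ∈ range (N + i), f j) hρ.le i fun i _ => by
      rw [← add_assoc, prod_range_succ, mul_comm ρ]
      exact mul_le_mul_of_nonneg_left (hN _ (Nat.le_add_right N i)) (hprod0 _)
  have hO : (fun k => ∏ j ∈ range k, f j) =O[atTop] (ρ ^ ·) := by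
    refine Asymptotics.IsBigO.of_bound ((∏ j ∈ range N, f j) / ρ ^ N) ?_
    filter_upwards [eventually_ge_atTop N] with k hk
    obtain ⟨i, rfl⟩ := Nat.exists_eq_add_of_le hk
    rw [Real.norm_of_nonneg (hprod0 _), Real.norm_of_nonneg (pow_nonneg hρ.le _)]
    calc _ ≤ ρ ^ i * ∏ j ∈ range N, f j := tail i
      _ = _ := by field_simp; ring
  obtain ⟨K, hK⟩ :=
    (Asymptotics.isBigO_nat_atTop_iff fun k h => absurd h (pow_ne_zero k hρ.ne')).1 hO
  refine ⟨K, fun k => ?_⟩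
  simpa [Real.norm_of_nonneg (hprod0 k), abs_of_pos hρ] using hK k

theorem tendsto_add_natCast_div_natCast_add (a b : ℝ) :
    Tendsto (fun j : ℕ => (a + j) / (j + b)) atTop (𝓝 1) := by
  simpa [add_comm _ b] using tendsto_add_mul_div_add_mul_atTop_nhds a b 1 one_ne_zero

/-- Splitting `σ ^ (m + n) = σ ^ m σ ^ n` with `1 < σ < 1 / max a b` decouples the two indices. -/
theorem summable_prod_range_add_mul_prod_range_mul_prod_range {u v w : ℕ → ℝ} {a b : ℝ}
    (hu0 : ∀ j, 0 ≤ u j) (hv0 : ∀ j, 0 ≤ v j) (hw0 : ∀ j, 0 ≤ w j)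
    (hu : ∀ σ > 1, ∀ᶠ j in atTop, u j ≤ σ)
    (hv : Tendsto v atTop (𝓝 a)) (ha : a < 1) (hw : Tendsto w atTop (𝓝 b)) (hb : b < 1) :
    Summable fun p : ℕ × ℕ =>
      (∏ j ∈ range (p.1 + p.2), u j) * (∏ j ∈ range p.1, v j) * ∏ j ∈ range p.2, w j := by
  set τ := max a b
  have hτ0 : 0 ≤ τ := le_max_of_le_left (ge_of_tendsto' hv hv0)
  have hτ1 : τ < 1 := max_lt ha hb
  set σ := 2 / (1 + τ)
  have hσ1 : 1 < σ := by rw [one_lt_div (by positivity)]; linarith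
  have hστ : σ * τ < 1 := by rw [div_mul_eq_mul_div, div_lt_one (by positivity)]; linarith
  obtain ⟨ρ, hστρ, hρ1⟩ := exists_between hστ
  have hρ0 : 0 < ρ := lt_of_le_of_lt (by positivity) hστρ
  have hscaled {z : ℕ → ℝ} {c : ℝ} (hz0 : ∀ j, 0 ≤ z j) (hz : Tendsto z atTop (𝓝 c))
      (hcτ : c ≤ τ) : ∃ K, ∀ k, ∏ j ∈ range k, (σ * z j) ≤ K * ρ ^ k :=
    exists_prod_range_le_mul_pow hρ0 (fun j => mul_nonneg (by positivity) (hz0 j))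
      ((hz.const_mul σ).eventually_le_const
        (lt_of_le_of_lt (mul_le_mul_of_nonneg_left hcτ (by positivity)) hστρ))
  obtain ⟨Ku, hKu⟩ := exists_prod_range_le_mul_pow (by positivity) hu0 (hu σ hσ1)
  obtain ⟨Kv, hKv⟩ := hscaled hv0 hv (le_max_left a b)
  obtain ⟨Kw, hKw⟩ := hscaled hw0 hw (le_max_right a b)
  have nonneg_of_bound {z : ℕ → ℝ} {K c : ℝ} (h : ∀ k, ∏ j ∈ range k, z j ≤ K * c ^ k) : 0 ≤ K :=
    zero_le_one.trans (by simpa using h 0)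
  have hKu0 := nonneg_of_bound hKu
  have hKv0 := nonneg_of_bound hKv
  have hKw0 := nonneg_of_bound hKw
  have hprod0 {z : ℕ → ℝ} (hz0 : ∀ j, 0 ≤ z j) (k : ℕ) : 0 ≤ ∏ j ∈ range k, z j :=
    prod_nonneg fun j _ => hz0 j
  have hgeom := summable_geometric_of_lt_one hρ0.le hρ1
  refine Summable.of_nonneg_of_le (fun p => ?_) (fun ⟨m, n⟩ => ?_)
    ((hgeom.mul_left (Ku * Kv)).mul_of_nonneg (hgeom.mul_left Kw)
      (fun m => mul_nonneg (mul_nonneg hKu0 hKv0) (by positivity))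
      (fun n => mul_nonneg hKw0 (by positivity)))
  · exact mul_nonneg (mul_nonneg (hprod0 hu0 _) (hprod0 hv0 _)) (hprod0 hw0 _)
  calc (∏ j ∈ range (m + n), u j) * (∏ j ∈ range m, v j) * ∏ j ∈ range n, w j
      ≤ (Ku * σ ^ (m + n)) * (∏ j ∈ range m, v j) * ∏ j ∈ range n, w j := by
        gcongr
        exacts [hprod0 hw0 _, hprod0 hv0 _, hKu _]
    _ = Ku * (∏ j ∈ range m, σ * v j) * ∏ j ∈ range n, σ * w j := by
        simp only [prod_mul_distrib, prod_const, card_range, pow_add]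
        ring
    _ ≤ Ku * (Kv * ρ ^ m) * (Kw * ρ ^ n) :=
        mul_le_mul (mul_le_mul_of_nonneg_left (hKv m) hKu0) (hKw n)
          (hprod0 (fun j => mul_nonneg (by positivity) (hw0 j)) n)
          (mul_nonneg hKu0 (mul_nonneg hKv0 (pow_nonneg hρ0.le m)))
    _ = Ku * Kv * ρ ^ m * (Kw * ρ ^ n) := by ring

section Norms

attribute [local instance] Matrix.linftyOpNormedAddCommGroup Matrix.linftyOpNormedRing
  Matrix.linftyOpNormedAlgebra

variable {r : ℕ}

local notation "𝕄" => Matrix (Fin r) (Fin r) ℂ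

theorem norm_mPoch_le [NeZero r] (A : 𝕄) (n : ℕ) : ‖mPoch A n‖ ≤ ∏ j ∈ range n, (‖A‖ + j) := by
  induction n with
  | zero => simp [mPoch]
  | succ n ih =>
    rw [prod_range_succ, mPoch]
    refine (norm_mul_le _ _).trans (mul_le_mul ih ((norm_add_le _ _).trans ?_) (norm_nonneg _)
      (prod_nonneg fun j _ => by positivity))
    simp

theorem norm_inv_mPoch_le [NeZero r] (C : 𝕄) (n : ℕ) :
    ‖(mPoch C n)⁻¹‖ ≤ ∏ j ∈ range n, ‖(C + (j : ℂ) • 1)⁻¹‖ := by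
  induction n with
  | zero => simp [mPoch]
  | succ n ih =>
    rw [prod_range_succ, mPoch, Matrix.mul_inv_rev, mul_comm (∏ _ ∈ _, _)]
    exact (norm_mul_le _ _).trans (mul_le_mul_of_nonneg_left ih (norm_nonneg _))

theorem norm_inv_add_smul_one_le {n 𝕜 : Type*} [Fintype n] [DecidableEq n] [Nonempty n]
    [NormedField 𝕜] {C : Matrix n n 𝕜} {c : 𝕜} (h : ‖C‖ < ‖c‖) :
    ‖(C + c • 1)⁻¹‖ ≤ (‖c‖ - ‖C‖)⁻¹ := by
  set N := C + c • 1
  by_cases hN : IsUnit N.det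
  · have hcN : c • N⁻¹ = 1 - N⁻¹ * C := by
      rw [← Matrix.nonsing_inv_mul N hN, ← mul_sub]
      simp [N]
    have key : ‖c‖ * ‖N⁻¹‖ ≤ 1 + ‖N⁻¹‖ * ‖C‖ :=
      calc ‖c‖ * ‖N⁻¹‖ = ‖1 - N⁻¹ * C‖ := by rw [← norm_smul, hcN]
        _ ≤ ‖(1 : Matrix n n 𝕜)‖ + ‖N⁻¹ * C‖ := norm_sub_le _ _
        _ ≤ 1 + ‖N⁻¹‖ * ‖C‖ := by rw [norm_one]; gcongr; exact norm_mul_le _ _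
    rw [← one_div (‖c‖ - ‖C‖), le_div_iff₀ (sub_pos.2 h)]
    linarith
  · rw [Matrix.nonsing_inv_apply_not_isUnit N hN, norm_zero]
    exact inv_nonneg.2 (sub_nonneg.2 h.le)

theorem eventually_mul_norm_inv_add_natCast_smul_one_le [NeZero r] (C : 𝕄) {a σ : ℝ} (ha : 0 ≤ a)
    (hσ : 1 < σ) : ∀ᶠ j : ℕ in atTop, (a + j) * ‖(C + (j : ℂ) • 1)⁻¹‖ ≤ σ := by
  filter_upwards [(tendsto_add_natCast_div_natCast_add a (-‖C‖)).eventually_le_const hσ,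
    tendsto_natCast_atTop_atTop.eventually_gt_atTop ‖C‖] with j hlim hj
  have hinv := norm_inv_add_smul_one_le (C := C) (c := j) (by simpa using hj)
  rw [Complex.norm_natCast] at hinv
  calc (a + j) * ‖(C + (j : ℂ) • 1)⁻¹‖ ≤ (a + j) * ((j : ℝ) - ‖C‖)⁻¹ :=
        mul_le_mul_of_nonneg_left hinv (by positivity)
    _ = (a + j) / (j + -‖C‖) := by rw [div_eq_mul_inv, sub_eq_add_neg]
    _ ≤ σ := hlim

theorem norm_appellF1Term_le [NeZero r] (A B B' C : 𝕄) (x y : ℂ) (m n : ℕ) :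
    ‖appellF1Term A B B' C x y (m, n)‖ ≤
      (∏ j ∈ range (m + n), (‖A‖ + j) * ‖(C + (j : ℂ) • 1)⁻¹‖) *
        (∏ j ∈ range m, ‖x‖ * ((‖B‖ + j) / (j + 1))) *
          ∏ j ∈ range n, ‖y‖ * ((‖B'‖ + j) / (j + 1)) := by
  have hfact (k : ℕ) : (k.factorial : ℝ) = ∏ j ∈ range k, ((j : ℝ) + 1) := by
    exact_mod_cast (prod_range_add_one_eq_factorial k).symm
  have hcoeff :
      ‖appellF1Coeff x y (m, n)‖ = (m.factorial * n.factorial : ℝ)⁻¹ * ‖x‖ ^ m * ‖y‖ ^ n := by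
    simp [appellF1Coeff]
  have hmat : ‖mPoch A (m + n) * mPoch B m * mPoch B' n * (mPoch C (m + n))⁻¹‖ ≤
      ‖mPoch A (m + n)‖ * ‖mPoch B m‖ * ‖mPoch B' n‖ * ‖(mPoch C (m + n))⁻¹‖ := by
    refine (norm_mul_le _ _).trans ?_
    gcongr
    refine (norm_mul_le _ _).trans ?_
    gcongr
    exact norm_mul_le _ _
  have hA := norm_mPoch_le A (m + n)
  have hB := norm_mPoch_le B m
  have hB' := norm_mPoch_le B' n
  have hC := norm_inv_mPoch_le C (m + n)
  calc ‖appellF1Term A B B' C x y (m, n)‖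
      ≤ ‖appellF1Coeff x y (m, n)‖ * ((∏ j ∈ range (m + n), (‖A‖ + j)) *
          (∏ j ∈ range m, (‖B‖ + j)) * (∏ j ∈ range n, (‖B'‖ + j)) *
            ∏ j ∈ range (m + n), ‖(C + (j : ℂ) • 1)⁻¹‖) := by
        rw [appellF1Term, norm_smul]
        gcongr
        exact hmat.trans (by gcongr)
    _ = _ := by
        rw [hcoeff, hfact, hfact]
        simp only [prod_mul_distrib, prod_div_distrib, prod_const, card_range]
        ring

theorem summable_appellF1Term (A B B' C : 𝕄) {x y : ℂ} (hx : ‖x‖ < 1) (hy : ‖y‖ < 1) :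
    Summable (appellF1Term A B B' C x y) := by
  rcases eq_zero_or_neZero r with rfl | _
  · exact summable_zero.congr fun _ => Subsingleton.elim _ _
  refine Summable.of_norm_bounded
    (summable_prod_range_add_mul_prod_range_mul_prod_range
      (u := fun j => (‖A‖ + j) * ‖(C + (j : ℂ) • 1)⁻¹‖)
      (v := fun j => ‖x‖ * ((‖B‖ + j) / (j + 1))) (w := fun j => ‖y‖ * ((‖B'‖ + j) / (j + 1)))
      (fun j => by positivity) (fun j => by positivity) (fun j => by positivity)
      (fun σ hσ => eventually_mul_norm_inv_add_natCast_smul_one_le C (norm_nonneg A) hσ)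
      (by simpa using (tendsto_add_natCast_div_natCast_add ‖B‖ 1).const_mul ‖x‖) hx
      (by simpa using (tendsto_add_natCast_div_natCast_add ‖B'‖ 1).const_mul ‖y‖) hy)
    fun ⟨m, n⟩ => norm_appellF1Term_le A B B' C x y m n

end Norms

section Recursion

variable {r : ℕ}

local notation "𝕄" => Matrix (Fin r) (Fin r) ℂ

theorem appellF1_add_one {A B : 𝕄} (hAB : Commute A B) {B' C : 𝕄} (hB'C : Commute B' C)
    {x y : ℂ} (hx : ‖x‖ < 1) (hy : ‖y‖ < 1) :
    appellF1 (A + 1) B B' C x y =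
      appellF1 A B B' C x y + x • (B * appellF1 (A + 1) (B + 1) B' (C + 1) x y * C⁻¹) +
        y • (appellF1 (A + 1) B (B' + 1) (C + 1) x y * B' * C⁻¹) := by
  have h0 : HasSum (appellF1Term A B B' C x y) (appellF1 A B B' C x y) :=
    (summable_appellF1Term A B B' C hx hy).hasSum
  have hfst : HasSum (fun p => (p.1 : ℂ) • appellF1ShiftTerm A B B' C x y p)
      (x • (B * appellF1 (A + 1) (B + 1) B' (C + 1) x y * C⁻¹)) := by
    refine (hasSum_comp_succ_fst_iff (by simp)).1 ?_
    simp only [natCast_succ_smul_appellF1ShiftTerm_succ_fst hAB]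
    exact (((summable_appellF1Term _ _ _ _ hx hy).hasSum.mul_left B).mul_right C⁻¹).const_smul x
  have hsnd : HasSum (fun p => (p.2 : ℂ) • appellF1ShiftTerm A B B' C x y p)
      (y • (appellF1 (A + 1) B (B' + 1) (C + 1) x y * B' * C⁻¹)) := by
    refine (hasSum_comp_succ_snd_iff (by simp)).1 ?_
    simp only [natCast_succ_smul_appellF1ShiftTerm_succ_snd A B hB'C]
    exact (((summable_appellF1Term _ _ _ _ hx hy).hasSum.mul_right B').mul_right C⁻¹).const_smul y
  rw [appellF1_eq_tsum (A + 1)]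
  refine HasSum.tsum_eq ?_
  simpa only [← appellF1Term_add_one] using (h0.add hfst).add hsnd

theorem appellF1_add_natCast_smul_one {A B : 𝕄} (hAB : Commute A B) {B' C : 𝕄}
    (hB'C : Commute B' C) {x y : ℂ} (hx : ‖x‖ < 1) (hy : ‖y‖ < 1) (s : ℕ) :
    appellF1 (A + (s : ℂ) • 1) B B' C x y =
      appellF1 A B B' C x y +
        x • (B * (∑ k ∈ Icc 1 s, appellF1 (A + (k : ℂ) • 1) (B + 1) B' (C + 1) x y) * C⁻¹) +
        y • ((∑ k ∈ Icc 1 s, appellF1 (A + (k : ℂ) • 1) B (B' + 1) (C + 1) x y) * B' * C⁻¹) := by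
  induction s with
  | zero => simp
  | succ s ih =>
    have hshift : A + ((s + 1 : ℕ) : ℂ) • 1 = A + (s : ℂ) • 1 + 1 := by push_cast; module
    rw [sum_Icc_succ_top (by omega), sum_Icc_succ_top (by omega), hshift,
      appellF1_add_one (hAB.add_left ((Commute.one_left B).smul_left _)) hB'C hx hy, ih]
    simp only [mul_add, add_mul, smul_add]
    abel

theorem appellF1_sub_natCast_smul_one {A B : 𝕄} (hAB : Commute A B) {B' C : 𝕄}
    (hB'C : Commute B' C) {x y : ℂ} (hx : ‖x‖ < 1) (hy : ‖y‖ < 1) (s : ℕ) :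
    appellF1 (A - (s : ℂ) • 1) B B' C x y =
      appellF1 A B B' C x y -
        x • (B * (∑ k ∈ range s, appellF1 (A - (k : ℂ) • 1) (B + 1) B' (C + 1) x y) * C⁻¹) -
        y • ((∑ k ∈ range s, appellF1 (A - (k : ℂ) • 1) B (B' + 1) (C + 1) x y) * B' * C⁻¹) := by
  induction s with
  | zero => simp
  | succ s ih =>
    have hstep := appellF1_add_one
      (hAB.sub_left ((Commute.one_left B).smul_left ((s + 1 : ℕ) : ℂ))) hB'C hx hy
    rw [show A - ((s + 1 : ℕ) : ℂ) • (1 : 𝕄) + 1 = A - (s : ℂ) • 1 by push_cast; module] at hstep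
    rw [eq_sub_of_add_eq (eq_sub_of_add_eq hstep.symm), ih, sum_range_succ, sum_range_succ]
    simp only [mul_add, add_mul, smul_add]
    abel

end Recursion

theorem appellF1_recursion_A_general {r : ℕ} (A B B' C : Matrix (Fin r) (Fin r) ℂ) (x y : ℂ)
    (hAB : A * B = B * A) (hB'C : B' * C = C * B')
    (hx : ‖x‖ < 1) (hy : ‖y‖ < 1) :
    ((∀ k : ℕ, IsUnit (A + (k : ℂ) • (1 : Matrix (Fin r) (Fin r) ℂ))) →
      ∀ s : ℕ,
        appellF1 (A + (s : ℂ) • 1) B B' C x y =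
          appellF1 A B B' C x y +
            x • (B * (∑ k ∈ Finset.Icc 1 s,
              appellF1 (A + (k : ℂ) • 1) (B + 1) B' (C + 1) x y) * C⁻¹) +
            y • ((∑ k ∈ Finset.Icc 1 s,
              appellF1 (A + (k : ℂ) • 1) B (B' + 1) (C + 1) x y) * B' * C⁻¹)) ∧
    ((∀ k : ℕ, IsUnit (A + (k : ℂ) • (1 : Matrix (Fin r) (Fin r) ℂ))) →
      ∀ s : ℕ,
        (∀ k : ℕ, 1 ≤ k → k ≤ s → IsUnit (A - (k : ℂ) • (1 : Matrix (Fin r) (Fin r) ℂ))) →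
        appellF1 (A - (s : ℂ) • 1) B B' C x y =
          appellF1 A B B' C x y -
            x • (B * (∑ k ∈ Finset.range s,
              appellF1 (A - (k : ℂ) • 1) (B + 1) B' (C + 1) x y) * C⁻¹) -
            y • ((∑ k ∈ Finset.range s,
              appellF1 (A - (k : ℂ) • 1) B (B' + 1) (C + 1) x y) * B' * C⁻¹)) :=
  ⟨fun _ => appellF1_add_natCast_smul_one hAB hB'C hx hy,
    fun _ s _ => appellF1_sub_natCast_smul_one hAB hB'C hx hy s⟩

theorem appellF1_recursion_A {r : ℕ} (A B B' C : Matrix (Fin r) (Fin r) ℂ) (x y : ℂ)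
    (hC : ∀ n : ℕ, IsUnit (C + (n : ℂ) • (1 : Matrix (Fin r) (Fin r) ℂ)))
    (hAB : A * B = B * A) (hB'C : B' * C = C * B')
    (hx : ‖x‖ < 1) (hy : ‖y‖ < 1) :
    ((∀ k : ℕ, IsUnit (A + (k : ℂ) • (1 : Matrix (Fin r) (Fin r) ℂ))) →
      ∀ s : ℕ,
        appellF1 (A + (s : ℂ) • 1) B B' C x y =
          appellF1 A B B' C x y +
            x • (B * (∑ k ∈ Finset.Icc 1 s,
              appellF1 (A + (k : ℂ) • 1) (B + 1) B' (C + 1) x y) * C⁻¹) +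
            y • ((∑ k ∈ Finset.Icc 1 s,
              appellF1 (A + (k : ℂ) • 1) B (B' + 1) (C + 1) x y) * B' * C⁻¹)) ∧
    ((∀ k : ℕ, IsUnit (A + (k : ℂ) • (1 : Matrix (Fin r) (Fin r) ℂ))) →
      ∀ s : ℕ,
        (∀ k : ℕ, 1 ≤ k → k ≤ s → IsUnit (A - (k : ℂ) • (1 : Matrix (Fin r) (Fin r) ℂ))) →
        appellF1 (A - (s : ℂ) • 1) B B' C x y =
          appellF1 A B B' C x y -
            x • (B * (∑ k ∈ Finset.range s,
              appellF1 (A - (k : ℂ) • 1) (B + 1) B' (C + 1) x y) * C⁻¹) -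
            y • ((∑ k ∈ Finset.range s,
              appellF1 (A - (k : ℂ) • 1) B (B' + 1) (C + 1) x y) * B' * C⁻¹)) :=
  appellF1_recursion_A_general A B B' C x y hAB hB'C hx hy
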